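/- (Convergence of the asynchronous relaxed nonstationary multisplitting method, M-matrix case.) Let A ∈ ℝ^{n×n} be an M-matrix, let D be its diagonal part and B = D − A, and set θ = ρ(D⁻¹B). Let ω ∈ (0, 2/(1+θ)). For i = 1, …, m, let A = M_i − N_i be M-splittings. Let x* ∈ ℝⁿ be a solution of LCP(A, f). For each k ∈ ℕ let J(k) ⊆ {1, …, m} be nonempty and let s₁(k), …, s_m(k) ∈ ℕ satisfy: (1) s_i(k) ≤ k for all i and k; (2) lim_{k→∞} s_i(k) = ∞ for all i; (3) for each i, the set {k : i ∈ J(k)} is unbounded. Let η = θ / (Σ_{i=1}^m ‖E_i‖), and suppose q̃ is a positive integer such that ‖(M_i⁻¹N_i)^q‖ ≤ η for all q ≥ q̃ and all i = 1, …, m, where ‖·‖ is the matrix ∞-norm; let integers q(i,k) ≥ q̃ be given for all i and k. For each k and each l ∈ J(k), let E_{i,l}^{(k)} (i = 1, …, m) be nonnegative diagonal matrices with Σ_{i=1}^m E_{i,l}^{(k)} = I. Define sequences x^{k,l} ∈ ℝⁿ (l = 1, …, m) by x^{0,l} = x⁰ for all l, and for each k: for each i, set y^{i,0} = x^{s_i(k),i}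 and for v = 1, …, q(i,k) let y^{i,v} solve LCP(M_i, f + N_i y^{i,v−1}); then x^{k+1,l} = x^{k,l} if l ∉ J(k), and x^{k+1,l} = ω Σ_{i=1}^m E_{i,l}^{(k)} y^{i,q(i,k)} + (1−ω) x^{k,l} if l ∈ J(k). Then for each l, the sequence {x^{k,l}}_{k∈ℕ} converges to x* as k → ∞. -/

import Mathlib

open Matrix Filter

noncomputable section

/-- Comparison matrix `⟨A⟩`: `α_ii = |a_ii|`, `α_ij = -|a_ij|` for `i ≠ j`. -/
def cmpMat {n : ℕ} (A : Matrix (Fin n) (Fin n) ℝ) : Matrix (Fin n) (Fin n) ℝ :=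
  Matrix.of fun i j => if i = j then |A i j| else -|A i j|

/-- Entrywise absolute value of a matrix. -/
def absMat {n : ℕ} (A : Matrix (Fin n) (Fin n) ℝ) : Matrix (Fin n) (Fin n) ℝ :=
  Matrix.of fun i j => |A i j|

/-- `A` is an M-matrix: nonpositive off-diagonal entries, nonsingular,
and entrywise nonnegative inverse. -/
def IsMMat {n : ℕ} (A : Matrix (Fin n) (Fin n) ℝ) : Prop :=
  (∀ i j, i ≠ j → A i j ≤ 0) ∧ IsUnit A.det ∧ ∀ i j, 0 ≤ A⁻¹ i j

/-- `A` is an H-matrix: its comparison matrix is an M-matrix. -/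
def IsHMat {n : ℕ} (A : Matrix (Fin n) (Fin n) ℝ) : Prop := IsMMat (cmpMat A)

/-- `A` is an H₊-matrix: an H-matrix with positive diagonal entries. -/
def IsHpMat {n : ℕ} (A : Matrix (Fin n) (Fin n) ℝ) : Prop :=
  IsHMat A ∧ ∀ i, 0 < A i i

/-- Spectral radius of a real matrix: supremum of moduli of its complex eigenvalues. -/
def specRad {n : ℕ} (A : Matrix (Fin n) (Fin n) ℝ) : ℝ :=
  sSup {r : ℝ | ∃ μ : ℂ, μ ∈ spectrum ℂ (A.map Complex.ofReal) ∧ r = ‖μ‖}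

/-- Matrix ∞-norm: maximum absolute row sum. -/
def infNorm {n : ℕ} (A : Matrix (Fin n) (Fin n) ℝ) : ℝ :=
  ⨆ i, ∑ j, |A i j|

/-- `x` solves the linear complementarity problem LCP(A, f):
`x ≥ 0`, `Ax - f ≥ 0`, `xᵀ(Ax - f) = 0`. -/
def SolvesLCP {n : ℕ} (A : Matrix (Fin n) (Fin n) ℝ) (f x : Fin n → ℝ) : Prop :=
  (∀ j, 0 ≤ x j) ∧ (∀ j, f j ≤ (A *ᵥ x) j) ∧ ∑ j, x j * ((A *ᵥ x) j - f j) = 0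

end

/-!
The error `e k l = ‖x k l - x*‖∞` obeys an asynchronous contraction. For an M-matrix `M` the
solution of an LCP is the least feasible point, which makes it Lipschitz in the right-hand side:
`|y' - y| ≤ M⁻¹ |g' - g|`. As `x*` is a fixed point of the inner sweep `y ↦ LCP(Mᵢ, f + Nᵢ y)`,
one sweep gives `|y' - x*| ≤ Mᵢ⁻¹Nᵢ |y - x*|`, and `q(i,k) ≥ q̃` sweeps shrink the delayed error
by `η`. The relaxed update then gives
`e (k+1) l ≤ ωη · maxᵢ e (sᵢ k) i + |1 - ω| · e k l`.
Since the Jacobi matrix of an M-matrix is nonnegative and contracts the positive vector `A⁻¹ 1`,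
the Collatz–Wielandt bound gives `η ≤ θ < 1`, so `c = ωη + |1 - ω| < 1`. Finally, as the delays
tend to infinity and every component is updated infinitely often, any uniform bound `R` on the
errors is eventually improved to `c R`.
-/

namespace Matrix

variable {n : ℕ}

theorem sum_abs_le_infNorm (A : Matrix (Fin n) (Fin n) ℝ) (i : Fin n) :
    ∑ j, |A i j| ≤ infNorm A :=
  le_ciSup (f := fun i => ∑ j, |A i j|) (Set.finite_range _).bddAbove i

theorem infNorm_nonneg (A : Matrix (Fin n) (Fin n) ℝ) : 0 ≤ infNorm A :=
  Real.iSup_nonneg fun _ => Finset.sum_nonneg fun _ _ => abs_nonneg _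

theorem norm_le_infNorm_mul_of_abs_le {P : Matrix (Fin n) (Fin n) ℝ} {u w : Fin n → ℝ}
    (h : |u| ≤ P *ᵥ |w|) : ‖u‖ ≤ infNorm P * ‖w‖ := by
  refine (pi_norm_le_iff_of_nonneg (mul_nonneg (infNorm_nonneg P) (norm_nonneg w))).2 fun i => ?_
  calc ‖u i‖ = |u i| := Real.norm_eq_abs _
    _ ≤ ∑ j, P i j * |w j| := h i
    _ ≤ ∑ j, |P i j| * ‖w‖ := Finset.sum_le_sum fun j _ =>
        mul_le_mul (le_abs_self _) (norm_le_pi_norm w j) (abs_nonneg _) (abs_nonneg _)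
    _ = (∑ j, |P i j|) * ‖w‖ := (Finset.sum_mul ..).symm
    _ ≤ infNorm P * ‖w‖ := by gcongr; exact sum_abs_le_infNorm P i

theorem mulVec_mono_of_nonneg {P : Matrix (Fin n) (Fin n) ℝ} (hP : ∀ i j, 0 ≤ P i j)
    {v w : Fin n → ℝ} (h : v ≤ w) : P *ᵥ v ≤ P *ᵥ w := fun i =>
  show ∑ j, P i j * v j ≤ ∑ j, P i j * w j from
    Finset.sum_le_sum fun j _ => mul_le_mul_of_nonneg_left (h j) (hP i j)

theorem mulVec_nonneg_of_nonneg {P : Matrix (Fin n) (Fin n) ℝ} (hP : ∀ i j, 0 ≤ P i j)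
    {v : Fin n → ℝ} (hv : 0 ≤ v) : 0 ≤ P *ᵥ v := by
  simpa using mulVec_mono_of_nonneg hP hv

theorem mulVec_apply_le_diag_mul {A : Matrix (Fin n) (Fin n) ℝ} {i : Fin n}
    (hA : ∀ j, i ≠ j → A i j ≤ 0) {v : Fin n → ℝ} (hv : 0 ≤ v) : (A *ᵥ v) i ≤ A i i * v i := by
  rw [mulVec, dotProduct, ← Finset.add_sum_erase _ _ (Finset.mem_univ i)]
  refine add_le_of_nonpos_right (Finset.sum_nonpos fun j hj => ?_)
  exact mul_nonpos_of_nonpos_of_nonneg (hA j (Finset.ne_of_mem_erase hj).symm) (hv j)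

theorem inv_diagonal_of_ne_zero {d : Fin n → ℝ} (hd : ∀ i, d i ≠ 0) :
    (diagonal d)⁻¹ = diagonal d⁻¹ := by
  refine inv_eq_left_inv ?_
  rw [diagonal_mul_diagonal, ← diagonal_one]
  exact congrArg diagonal (funext fun i => inv_mul_cancel₀ (hd i))

end Matrix

open Matrix

section

variable {n : ℕ}

theorem IsMMat.diag_pos {A : Matrix (Fin n) (Fin n) ℝ} (hA : IsMMat A) (i : Fin n) :
    0 < A i i := by
  have h : 1 ≤ A i i * A⁻¹ i i := by
    have := mulVec_apply_le_diag_mul (hA.1 i) (v := fun j => A⁻¹ j i) fun j => hA.2.2 j i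
    rwa [show (A *ᵥ fun j => A⁻¹ j i) i = (A * A⁻¹) i i from rfl, mul_nonsing_inv _ hA.2.1,
      one_apply_eq] at this
  exact pos_of_mul_pos_left (one_pos.trans_le h) (hA.2.2 i i)

theorem IsMMat.inv_mulVec_one_pos {A : Matrix (Fin n) (Fin n) ℝ} (hA : IsMMat A) (i : Fin n) :
    0 < (A⁻¹ *ᵥ 1) i := by
  have hx : 0 ≤ A⁻¹ *ᵥ 1 := mulVec_nonneg_of_nonneg hA.2.2 zero_le_one
  have h := mulVec_apply_le_diag_mul (hA.1 i) hx
  rw [mulVec_mulVec, mul_nonsing_inv _ hA.2.1, one_mulVec, Pi.one_apply] at h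
  exact pos_of_mul_pos_right (one_pos.trans_le h) (hA.diag_pos i).le

theorem SolvesLCP.mulVec_apply_eq {M : Matrix (Fin n) (Fin n) ℝ} {g x : Fin n → ℝ}
    (hx : SolvesLCP M g x) {j : Fin n} (hj : 0 < x j) : (M *ᵥ x) j = g j := by
  have := (Finset.sum_eq_zero_iff_of_nonneg fun i _ =>
    mul_nonneg (hx.1 i) (sub_nonneg.2 (hx.2.1 i))).1 hx.2.2 j (Finset.mem_univ j)
  linarith [(mul_eq_zero.1 this).resolve_left hj.ne']

theorem SolvesLCP.add_mulVec {A N : Matrix (Fin n) (Fin n) ℝ} {f x : Fin n → ℝ}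
    (hx : SolvesLCP A f x) : SolvesLCP (A + N) (f + N *ᵥ x) x := by
  refine ⟨hx.1, fun j => ?_, ?_⟩
  · simpa [Matrix.add_mulVec] using hx.2.1 j
  · simpa [Matrix.add_mulVec] using hx.2.2

theorem SolvesLCP.le_of_feasible {M : Matrix (Fin n) (Fin n) ℝ} (hM : IsMMat M)
    {g x z : Fin n → ℝ} (hx : SolvesLCP M g x) (hz : 0 ≤ z) (hgz : g ≤ M *ᵥ z) : x ≤ z := by
  set d : Fin n → ℝ := fun j => max (x j - z j) 0 with hd
  have hd0 : 0 ≤ d := fun j => le_max_right _ _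
  have hMd : M *ᵥ d ≤ 0 := by
    intro j
    rcases (hd0 j).eq_or_lt with hj | hj
    · simpa [← hj] using mulVec_apply_le_diag_mul (hM.1 j) hd0
    have hxz : z j < x j := by simpa [hd] using hj
    calc (M *ᵥ d) j ≤ (M *ᵥ (x - z)) j := by
          show ∑ i, M j i * d i ≤ ∑ i, M j i * (x i - z i)
          refine Finset.sum_le_sum fun i _ => ?_
          obtain rfl | hji := eq_or_ne j i
          · exact (congrArg (M j j * ·) (max_eq_left (sub_nonneg.2 hxz.le))).le
          · exact mul_le_mul_of_nonpos_left (le_max_left _ _) (hM.1 j i hji)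
      _ = g j - (M *ᵥ z) j := by
          rw [mulVec_sub, Pi.sub_apply, hx.mulVec_apply_eq ((hz j).trans_lt hxz)]
      _ ≤ 0 := sub_nonpos.2 (hgz j)
  have hd_le : d ≤ 0 := by
    have := mulVec_mono_of_nonneg hM.2.2 hMd
    rwa [mulVec_mulVec, nonsing_inv_mul _ hM.2.1, one_mulVec, mulVec_zero] at this
  exact fun j => sub_nonpos.1 ((le_max_left _ _).trans (hd_le j))

theorem SolvesLCP.abs_sub_le {M : Matrix (Fin n) (Fin n) ℝ} (hM : IsMMat M)
    {g g' x x' : Fin n → ℝ} (hx : SolvesLCP M g x) (hx' : SolvesLCP M g' x') :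
    |x - x'| ≤ M⁻¹ *ᵥ |g - g'| := by
  have key : ∀ {g g' x x' : Fin n → ℝ}, SolvesLCP M g x → SolvesLCP M g' x' →
      x - x' ≤ M⁻¹ *ᵥ |g - g'| := by
    intro g g' x x' hx hx'
    have hz : 0 ≤ x' + M⁻¹ *ᵥ |g - g'| :=
      add_nonneg (fun j => hx'.1 j) (mulVec_nonneg_of_nonneg hM.2.2 (abs_nonneg _))
    have hgz : g ≤ M *ᵥ (x' + M⁻¹ *ᵥ |g - g'|) := by
      rw [mulVec_add, mulVec_mulVec, mul_nonsing_inv _ hM.2.1, one_mulVec]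
      intro j
      have hfeas := hx'.2.1 j
      simp only [Pi.add_apply, Pi.abs_apply, Pi.sub_apply]
      linarith [le_abs_self (g j - g' j)]
    exact sub_le_iff_le_add'.2 (hx.le_of_feasible hM hz hgz)
  intro j
  rw [Pi.abs_apply, Pi.sub_apply, abs_sub_le_iff]
  refine ⟨key hx hx' j, ?_⟩
  simpa only [abs_sub_comm g', Pi.sub_apply] using key hx' hx j

theorem abs_iterate_lcp_sub_le {M N : Matrix (Fin n) (Fin n) ℝ} (hM : IsMMat M)
    (hN : ∀ i j, 0 ≤ N i j) {f xs : Fin n → ℝ} (hxs : SolvesLCP M (f + N *ᵥ xs) xs)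
    {y : ℕ → Fin n → ℝ} {q : ℕ} (hy : ∀ v < q, SolvesLCP M (f + N *ᵥ y v) (y (v + 1))) :
    ∀ v ≤ q, |y v - xs| ≤ (M⁻¹ * N) ^ v *ᵥ |y 0 - xs| := by
  intro v hv
  induction v with
  | zero => simp
  | succ v ih =>
    have hrhs : |f + N *ᵥ y v - (f + N *ᵥ xs)| ≤ N *ᵥ |y v - xs| := by
      rw [add_sub_add_left_eq_sub, ← mulVec_sub]
      intro i
      show |∑ j, N i j * (y v - xs) j| ≤ ∑ j, N i j * |y v - xs| j
      refine (Finset.abs_sum_le_sum_abs _ _).trans_eq (Finset.sum_congr rfl fun j _ => ?_)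
      rw [abs_mul, abs_of_nonneg (hN i j), Pi.abs_apply]
    calc |y (v + 1) - xs| ≤ M⁻¹ *ᵥ |f + N *ᵥ y v - (f + N *ᵥ xs)| :=
          (hy v hv).abs_sub_le hM hxs
      _ ≤ M⁻¹ *ᵥ (N *ᵥ ((M⁻¹ * N) ^ v *ᵥ |y 0 - xs|)) :=
          mulVec_mono_of_nonneg hM.2.2 (hrhs.trans (mulVec_mono_of_nonneg hN (ih (by omega))))
      _ = (M⁻¹ * N) ^ (v + 1) *ᵥ |y 0 - xs| := by
          rw [mulVec_mulVec, mulVec_mulVec, pow_succ', Matrix.mul_assoc]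

theorem norm_iterate_lcp_sub_le {M N : Matrix (Fin n) (Fin n) ℝ} (hM : IsMMat M)
    (hN : ∀ i j, 0 ≤ N i j) {f xs : Fin n → ℝ} (hxs : SolvesLCP M (f + N *ᵥ xs) xs)
    {y : ℕ → Fin n → ℝ} {q : ℕ} (hy : ∀ v < q, SolvesLCP M (f + N *ᵥ y v) (y (v + 1))) :
    ‖y q - xs‖ ≤ infNorm ((M⁻¹ * N) ^ q) * ‖y 0 - xs‖ :=
  norm_le_infNorm_mul_of_abs_le (abs_iterate_lcp_sub_le hM hN hxs hy q le_rfl)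

theorem norm_sum_mulVec_le {ι : Type*} [Fintype ι] {D : ι → Matrix (Fin n) (Fin n) ℝ}
    (hdiag : ∀ i p r, p ≠ r → D i p r = 0) (hnn : ∀ i p, 0 ≤ D i p p) (hsum : ∑ i, D i = 1)
    {w : ι → Fin n → ℝ} {R : ℝ} (hR : 0 ≤ R) (hw : ∀ i, ‖w i‖ ≤ R) :
    ‖∑ i, D i *ᵥ w i‖ ≤ R := by
  refine (pi_norm_le_iff_of_nonneg hR).2 fun p => ?_
  have hD : ∀ i, (D i *ᵥ w i) p = D i p p * w i p := fun i =>
    show ∑ r, D i p r * w i r = _ from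
      Fintype.sum_eq_single p fun r hr => by rw [hdiag i p r (Ne.symm hr), zero_mul]
  have hsum_p : ∑ i, D i p p = 1 := by
    simpa [Matrix.sum_apply] using congrFun (congrFun hsum p) p
  calc ‖(∑ i, D i *ᵥ w i) p‖ = |∑ i, D i p p * w i p| := by
        rw [Real.norm_eq_abs, Finset.sum_apply]; simp only [hD]
    _ ≤ ∑ i, D i p p * R := (Finset.abs_sum_le_sum_abs _ _).trans <|
        Finset.sum_le_sum fun i _ => by
          rw [abs_mul, abs_of_nonneg (hnn i p)]
          exact mul_le_mul_of_nonneg_left ((norm_le_pi_norm (w i) p).trans (hw i)) (hnn i p)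
    _ = R := by rw [← Finset.sum_mul, hsum_p, one_mul]

theorem relaxed_sub_eq {ι : Type*} [Fintype ι] {D : ι → Matrix (Fin n) (Fin n) ℝ}
    (hsum : ∑ i, D i = 1) (ω : ℝ) (w : ι → Fin n → ℝ) (z xs : Fin n → ℝ) :
    ω • ∑ i, D i *ᵥ w i + (1 - ω) • z - xs
      = ω • ∑ i, D i *ᵥ (w i - xs) + (1 - ω) • (z - xs) := by
  have : ∑ i, D i *ᵥ xs = xs := by rw [← Matrix.sum_mulVec, hsum, one_mulVec]
  simp only [mulVec_sub, Finset.sum_sub_distrib, this, smul_sub]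
  module

theorem norm_relaxed_sub_le {ι : Type*} [Fintype ι] {D : ι → Matrix (Fin n) (Fin n) ℝ}
    (hdiag : ∀ i p r, p ≠ r → D i p r = 0) (hnn : ∀ i p, 0 ≤ D i p p) (hsum : ∑ i, D i = 1)
    {ω : ℝ} (hω : 0 ≤ ω) {w : ι → Fin n → ℝ} {z xs : Fin n → ℝ} {R : ℝ} (hR : 0 ≤ R)
    (hw : ∀ i, ‖w i - xs‖ ≤ R) :
    ‖ω • ∑ i, D i *ᵥ w i + (1 - ω) • z - xs‖ ≤ ω * R + |1 - ω| * ‖z - xs‖ := by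
  rw [relaxed_sub_eq hsum]
  refine (norm_add_le _ _).trans ?_
  rw [norm_smul, norm_smul, Real.norm_of_nonneg hω, Real.norm_eq_abs]
  gcongr
  exact norm_sum_mulVec_le hdiag hnn hsum hR hw

theorem specRad_nonneg (P : Matrix (Fin n) (Fin n) ℝ) : 0 ≤ specRad P :=
  Real.sSup_nonneg fun _ ⟨μ, _, hr⟩ => hr ▸ norm_nonneg μ

/-- Collatz–Wielandt bound. -/
theorem norm_le_of_mem_spectrum_of_mulVec_le {P : Matrix (Fin n) (Fin n) ℝ} {x : Fin n → ℝ}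
    {γ : ℝ} {μ : ℂ} (hP : ∀ i j, 0 ≤ P i j) (hx : ∀ i, 0 < x i)
    (hPx : ∀ i, (P *ᵥ x) i ≤ γ * x i) (hμ : μ ∈ spectrum ℂ (P.map Complex.ofReal)) :
    ‖μ‖ ≤ γ := by
  rw [← Matrix.spectrum_toLin', ← Module.End.hasEigenvalue_iff_mem_spectrum] at hμ
  obtain ⟨v, hv, hv0⟩ := hμ.exists_hasEigenvector
  rw [Module.End.mem_eigenspace_iff, Matrix.toLin'_apply] at hv
  obtain ⟨j₀, hj₀⟩ : ∃ j, v j ≠ 0 := by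
    by_contra! h
    exact hv0 (funext h)
  obtain ⟨i, -, hi⟩ := Finset.univ.exists_max_image (fun j => ‖v j‖ / x j) ⟨j₀, Finset.mem_univ _⟩
  set t := ‖v i‖ / x i with ht
  have hvt : ∀ j, ‖v j‖ ≤ t * x j := fun j => (div_le_iff₀ (hx j)).1 (hi j (Finset.mem_univ _))
  have ht0 : 0 < t := pos_of_mul_pos_left ((norm_pos_iff.2 hj₀).trans_le (hvt j₀)) (hx j₀).le
  have hvi : ‖v i‖ = t * x i := by rw [ht, div_mul_cancel₀ _ (hx i).ne']
  have key : ‖μ‖ * ‖v i‖ ≤ γ * ‖v i‖ :=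
    calc ‖μ‖ * ‖v i‖ = ‖∑ j, (P i j : ℂ) * v j‖ := by
          rw [← norm_mul, ← smul_eq_mul, ← Pi.smul_apply, ← hv]; rfl
      _ ≤ ∑ j, P i j * (t * x j) := (norm_sum_le _ _).trans <| Finset.sum_le_sum fun j _ => by
          rw [norm_mul, Complex.norm_real, Real.norm_of_nonneg (hP i j)]
          exact mul_le_mul_of_nonneg_left (hvt j) (hP i j)
      _ = t * (P *ᵥ x) i := by
          show _ = t * ∑ j, P i j * x j
          rw [Finset.mul_sum]
          exact Finset.sum_congr rfl fun j _ => by ring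
      _ ≤ γ * ‖v i‖ := by
          rw [hvi, mul_left_comm]
          exact mul_le_mul_of_nonneg_left (hPx i) ht0.le
  exact le_of_mul_le_mul_right key (hvi ▸ mul_pos ht0 (hx i))

theorem specRad_le_of_mulVec_le {P : Matrix (Fin n) (Fin n) ℝ} {x : Fin n → ℝ} {γ : ℝ}
    (hP : ∀ i j, 0 ≤ P i j) (hx : ∀ i, 0 < x i) (hPx : ∀ i, (P *ᵥ x) i ≤ γ * x i)
    (hγ : 0 ≤ γ) : specRad P ≤ γ :=
  Real.sSup_le (fun _ ⟨_, hμ, hr⟩ => hr ▸ norm_le_of_mem_spectrum_of_mulVec_le hP hx hPx hμ) hγ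

theorem exists_forall_le_lt_one {ι : Type*} [Finite ι] {a : ι → ℝ} (ha : ∀ i, a i < 1) :
    ∃ γ, 0 ≤ γ ∧ γ < 1 ∧ ∀ i, a i ≤ γ := by
  have h₀ : ∀ᶠ γ in nhdsWithin (1 : ℝ) (Set.Iio 1), γ ∈ Set.Ioo 0 1 := Ioo_mem_nhdsLT one_pos
  have h : ∀ᶠ γ in nhdsWithin (1 : ℝ) (Set.Iio 1), ∀ i, γ ∈ Set.Ioo (a i) 1 :=
    eventually_all.2 fun i => Ioo_mem_nhdsLT (ha i)
  obtain ⟨γ, hγ₀, hγ⟩ := (h₀.and h).exists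
  exact ⟨γ, hγ₀.1.le, hγ₀.2, fun i => (hγ i).1.le⟩

/-- `A⁻¹ 1` is a positive test vector for the Collatz–Wielandt bound. -/
theorem IsMMat.specRad_jacobi_lt_one {A : Matrix (Fin n) (Fin n) ℝ} (hA : IsMMat A) :
    specRad ((diagonal fun p => A p p)⁻¹ * (diagonal (fun p => A p p) - A)) < 1 := by
  set d : Fin n → ℝ := fun p => A p p with hd
  have hd0 : ∀ i, d i ≠ 0 := fun i => (hA.diag_pos i).ne'
  have hx := hA.inv_mulVec_one_pos
  have hJ : ∀ i j, 0 ≤ ((diagonal d)⁻¹ * (diagonal d - A)) i j := by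
    intro i j
    rw [inv_diagonal_of_ne_zero hd0, diagonal_mul]
    refine mul_nonneg (inv_nonneg.2 (hA.diag_pos i).le) ?_
    obtain rfl | hij := eq_or_ne i j
    · simp [hd]
    · simpa [diagonal_apply_ne _ hij] using hA.1 i j hij
  have hJx : ∀ i, (((diagonal d)⁻¹ * (diagonal d - A)) *ᵥ (A⁻¹ *ᵥ 1)) i
      = (A⁻¹ *ᵥ 1) i - (d i)⁻¹ := by
    intro i
    have hAx : A *ᵥ (A⁻¹ *ᵥ 1) = 1 := by
      rw [mulVec_mulVec, mul_nonsing_inv _ hA.2.1, one_mulVec]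
    rw [← mulVec_mulVec, sub_mulVec, hAx, inv_diagonal_of_ne_zero hd0, mulVec_diagonal,
      Pi.sub_apply, mulVec_diagonal, Pi.one_apply, Pi.inv_apply]
    field_simp [hd0 i]
  obtain ⟨γ, hγ0, hγ1, hγ⟩ := exists_forall_le_lt_one (a := fun i => 1 - (d i)⁻¹ / (A⁻¹ *ᵥ 1) i)
    fun i => sub_lt_self _ (div_pos (inv_pos.2 (hA.diag_pos i)) (hx i))
  refine (specRad_le_of_mulVec_le hJ hx (fun i => ?_) hγ0).trans_lt hγ1
  have := mul_le_mul_of_nonneg_right (hγ i) (hx i).le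
  rw [hJx]
  rwa [sub_mul, one_mul, div_mul_cancel₀ _ (hx i).ne'] at this

theorem one_le_sum_infNorm [Nonempty (Fin n)] {ι : Type*} [Fintype ι]
    {E : ι → Matrix (Fin n) (Fin n) ℝ} (hE : ∑ i, E i = 1) : 1 ≤ ∑ i, infNorm (E i) := by
  obtain ⟨p⟩ := ‹Nonempty (Fin n)›
  calc (1 : ℝ) = ∑ i, E i p p := by simpa [Matrix.sum_apply] using (congrFun (congrFun hE p) p).symm
    _ ≤ ∑ i, |E i p p| := Finset.sum_le_sum fun i _ => le_abs_self _
    _ ≤ ∑ i, infNorm (E i) := Finset.sum_le_sum fun i _ =>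
        (Finset.single_le_sum (fun j _ => abs_nonneg (E i p j)) (Finset.mem_univ p)).trans
          (sum_abs_le_infNorm (E i) p)

end

theorem relaxation_factor_lt_one {ω η θ : ℝ} (hω : 0 < ω) (hωθ : ω < 2 / (1 + θ))
    (hη : 0 ≤ η) (hηθ : η ≤ θ) (hθ : θ < 1) : ω * η + |1 - ω| < 1 := by
  have hω2 : ω * (1 + θ) < 2 := (lt_div_iff₀ (by linarith)).1 hωθ
  rcases le_or_gt ω 1 with h | h
  · rw [abs_of_nonneg (sub_nonneg.2 h)]
    nlinarith
  · rw [abs_of_neg (sub_neg.2 h)]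
    nlinarith

/-- Error recursion of an asynchronous iteration: at step `k` exactly the components in `J k`
are updated, from the delayed components `s i k`. -/
structure AsyncContraction {ι : Type*} (e : ℕ → ι → ℝ) (J : ℕ → Finset ι) (s : ι → ℕ → ℕ)
    (a b : ℝ) : Prop where
  nonneg : ∀ k l, 0 ≤ e k l
  eq_of_notMem : ∀ k l, l ∉ J k → e (k + 1) l = e k l
  le_of_mem : ∀ k l, l ∈ J k → ∀ R, (∀ i, e (s i k) i ≤ R) → e (k + 1) l ≤ a * R + b * e k l

namespace AsyncContraction

variable {ι : Type*} [Fintype ι] {e : ℕ → ι → ℝ} {J : ℕ → Finset ι} {s : ι → ℕ → ℕ} {a b : ℝ}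

theorem le_sum_initial (h : AsyncContraction e J s a b) (hb : 0 ≤ b) (hab : a + b ≤ 1)
    (hs : ∀ i k, s i k ≤ k) (k : ℕ) (l : ι) : e k l ≤ ∑ i, e 0 i := by
  have hB : 0 ≤ ∑ i, e 0 i := Finset.sum_nonneg fun i _ => h.nonneg 0 i
  induction k using Nat.strong_induction_on generalizing l with
  | _ k ih =>
    cases k with
    | zero => exact Finset.single_le_sum (fun i _ => h.nonneg 0 i) (Finset.mem_univ l)
    | succ k =>
      by_cases hl : l ∈ J k
      · calc e (k + 1) l ≤ a * ∑ i, e 0 i + b * e k l :=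
              h.le_of_mem k l hl _ fun i => ih _ (Nat.lt_succ_of_le (hs i k)) i
          _ ≤ a * ∑ i, e 0 i + b * ∑ i, e 0 i := by gcongr; exact ih k k.lt_succ_self l
          _ ≤ ∑ i, e 0 i := by nlinarith
      · rw [h.eq_of_notMem k l hl]
        exact ih k k.lt_succ_self l

/-- Once all components and all delays have entered the region `e ≤ R`, every component
gets updated at least once more and lands in `e ≤ (a + b) R`. -/
theorem eventually_le_mul (h : AsyncContraction e J s a b) (hb : 0 ≤ b)
    (hs : ∀ i, Tendsto (s i) atTop atTop) (hJ : ∀ i K, ∃ k, K ≤ k ∧ i ∈ J k) {R : ℝ} {K : ℕ}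
    (hR : ∀ k, K ≤ k → ∀ l, e k l ≤ R) :
    ∃ K', ∀ k, K' ≤ k → ∀ l, e k l ≤ (a + b) * R := by
  obtain ⟨K₁, hK₁⟩ := eventually_atTop.1
    ((eventually_all.2 fun i => (hs i).eventually_ge_atTop K).and (eventually_ge_atTop K))
  have hstep : ∀ k, K₁ ≤ k → ∀ l, l ∈ J k → e (k + 1) l ≤ (a + b) * R := fun k hk l hl =>
    calc e (k + 1) l ≤ a * R + b * e k l :=
          h.le_of_mem k l hl R fun i => hR _ ((hK₁ k hk).1 i) i
      _ ≤ a * R + b * R := by gcongr; exact hR k (hK₁ k hk).2 l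
      _ = (a + b) * R := by ring
  have hcomp : ∀ l, ∃ Kl, ∀ k, Kl ≤ k → e k l ≤ (a + b) * R := by
    intro l
    obtain ⟨k₀, hk₀, hl⟩ := hJ l K₁
    refine ⟨k₀ + 1, fun k hk => ?_⟩
    induction k, hk using Nat.le_induction with
    | base => exact hstep k₀ hk₀ l hl
    | succ k hk ih =>
      by_cases hlk : l ∈ J k
      · exact hstep k (hk₀.trans (Nat.le_of_succ_le hk)) l hlk
      · rw [h.eq_of_notMem k l hlk]
        exact ih
  choose Kl hKl using hcomp
  exact ⟨Finset.univ.sup Kl, fun k hk l => hKl l k ((Finset.le_sup (Finset.mem_univ l)).trans hk)⟩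

theorem tendsto_zero (h : AsyncContraction e J s a b) (ha : 0 ≤ a) (hb : 0 ≤ b)
    (hab : a + b < 1) (hs₁ : ∀ i k, s i k ≤ k) (hs₂ : ∀ i, Tendsto (s i) atTop atTop)
    (hJ : ∀ i K, ∃ k, K ≤ k ∧ i ∈ J k) (l : ι) : Tendsto (fun k => e k l) atTop (nhds 0) := by
  have hpow : ∀ t : ℕ, ∃ K, ∀ k, K ≤ k → ∀ l, e k l ≤ (a + b) ^ t * ∑ i, e 0 i := by
    intro t
    induction t with
    | zero => exact ⟨0, fun k _ l => by simpa using h.le_sum_initial hb hab.le hs₁ k l⟩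
    | succ t ih =>
      obtain ⟨K, hK⟩ := ih
      simpa only [pow_succ', mul_assoc] using h.eventually_le_mul hb hs₂ hJ hK
  have hlim : Tendsto (fun t : ℕ => (a + b) ^ t * ∑ i, e 0 i) atTop (nhds 0) := by
    simpa using (tendsto_pow_atTop_nhds_zero_of_lt_one (add_nonneg ha hb) hab).mul_const _
  refine tendsto_order.2 ⟨fun ε hε => Eventually.of_forall fun k => hε.trans_le (h.nonneg k l),
    fun ε hε => ?_⟩
  obtain ⟨t, ht⟩ := (hlim.eventually (gt_mem_nhds hε)).exists
  obtain ⟨K, hK⟩ := hpow t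
  exact eventually_atTop.2 ⟨K, fun k hk => (hK k hk l).trans_lt ht⟩

end AsyncContraction

theorem async_relaxed_nonstationary_multisplitting_converges_M_general {n m : ℕ}
    (A : Matrix (Fin n) (Fin n) ℝ) (f xstar : Fin n → ℝ)
    (hA : IsMMat A)
    (θ : ℝ)
    (hθ : θ = specRad ((Matrix.diagonal fun p => A p p)⁻¹ *
      (Matrix.diagonal (fun p => A p p) - A)))
    (ω : ℝ) (hω : 0 < ω ∧ ω < 2 / (1 + θ))
    (M N : Fin m → Matrix (Fin n) (Fin n) ℝ)
    (hsplit : ∀ i, A = M i - N i)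
    (hMM : ∀ i, IsMMat (M i))
    (hNnn : ∀ i, ∀ p q, 0 ≤ N i p q)
    (hxstar : SolvesLCP A f xstar)
    (J : ℕ → Finset (Fin m))
    (s : Fin m → ℕ → ℕ)
    (hs1 : ∀ i k, s i k ≤ k)
    (hs2 : ∀ i, Filter.Tendsto (s i) Filter.atTop Filter.atTop)
    (hs3 : ∀ i, ∀ K : ℕ, ∃ k, K ≤ k ∧ i ∈ J k)
    (E : Fin m → Matrix (Fin n) (Fin n) ℝ)
    (hEsum : ∑ i, E i = 1)
    (η : ℝ) (hη : η = θ / ∑ i, infNorm (E i))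
    (qt : ℕ)
    (hnorm : ∀ i, ∀ q, qt ≤ q → infNorm (((M i)⁻¹ * N i) ^ q) ≤ η)
    (q : Fin m → ℕ → ℕ) (hq : ∀ i k, qt ≤ q i k)
    (Ek : ℕ → Fin m → Fin m → Matrix (Fin n) (Fin n) ℝ)
    (hEkdiag : ∀ k i l, ∀ p r, p ≠ r → Ek k i l p r = 0)
    (hEknn : ∀ k i l p, 0 ≤ Ek k i l p p)
    (hEksum : ∀ k l, l ∈ J k → ∑ i, Ek k i l = 1)
    (x : ℕ → Fin m → Fin n → ℝ)
    (y : ℕ → Fin m → ℕ → Fin n → ℝ)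
    (hy0 : ∀ k i, y k i 0 = x (s i k) i)
    (hy : ∀ k i v, 1 ≤ v → v ≤ q i k →
      SolvesLCP (M i) (fun p => f p + (N i *ᵥ y k i (v - 1)) p) (y k i v))
    (hxn : ∀ k l, l ∉ J k → x (k + 1) l = x k l)
    (hxj : ∀ k l, l ∈ J k →
      x (k + 1) l = ω • (∑ i, Ek k i l *ᵥ y k i (q i k)) + (1 - ω) • x k l) :
    ∀ l, Filter.Tendsto (fun k => x k l) Filter.atTop (nhds xstar) := by
  intro l
  rcases isEmpty_or_nonempty (Fin n) with _ | _
  · exact tendsto_const_nhds.congr fun _ => Subsingleton.elim _ _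
  have hθ1 : θ < 1 := hθ ▸ hA.specRad_jacobi_lt_one
  have hη0 : 0 ≤ η := (infNorm_nonneg _).trans (hnorm l qt le_rfl)
  have hηθ : η ≤ θ := hη ▸ div_le_self (hθ ▸ specRad_nonneg _) (one_le_sum_infNorm hEsum)
  have hsol : ∀ i, SolvesLCP (M i) (f + N i *ᵥ xstar) xstar := fun i => by
    simpa [hsplit i] using hxstar.add_mulVec (N := N i)
  have hinner : ∀ k i, ‖y k i (q i k) - xstar‖ ≤ η * ‖x (s i k) i - xstar‖ := fun k i => by
    rw [← hy0 k i]
    refine (norm_iterate_lcp_sub_le (hMM i) (hNnn i) (hsol i) fun v hv => ?_).trans ?_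
    · exact hy k i (v + 1) (by omega) hv
    · gcongr
      exact hnorm i _ (hq i k)
  have hasync : AsyncContraction (fun k l => ‖x k l - xstar‖) J s (ω * η) |1 - ω| := by
    refine ⟨fun k l => norm_nonneg _, fun k l hl => by simp only [hxn k l hl],
      fun k l hl R hR => ?_⟩
    rw [hxj k l hl, mul_assoc]
    exact norm_relaxed_sub_le (hEkdiag k · l) (hEknn k · l) (hEksum k l hl) hω.1.le
      (mul_nonneg hη0 ((norm_nonneg _).trans (hR l)))
      fun i => (hinner k i).trans (mul_le_mul_of_nonneg_left (hR i) hη0)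
  exact tendsto_iff_norm_sub_tendsto_zero.2 <| hasync.tendsto_zero (mul_nonneg hω.1.le hη0)
    (abs_nonneg _) (relaxation_factor_lt_one hω.1 hω.2 hη0 hηθ hθ1) hs1 hs2 hs3 l

/-- Corollary 3.1: convergence of the asynchronous relaxed nonstationary
multisplitting method for LCP with an M-matrix and M-splittings. -/
theorem async_relaxed_nonstationary_multisplitting_converges_M {n m : ℕ}
    (A : Matrix (Fin n) (Fin n) ℝ) (f xstar x0 : Fin n → ℝ)
    (hA : IsMMat A)
    (θ : ℝ)
    (hθ : θ = specRad ((Matrix.diagonal fun p => A p p)⁻¹ *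
      (Matrix.diagonal (fun p => A p p) - A)))
    (ω : ℝ) (hω : 0 < ω ∧ ω < 2 / (1 + θ))
    (M N : Fin m → Matrix (Fin n) (Fin n) ℝ)
    (hsplit : ∀ i, A = M i - N i)
    (hMM : ∀ i, IsMMat (M i))
    (hNnn : ∀ i, ∀ p q, 0 ≤ N i p q)
    (hxstar : SolvesLCP A f xstar)
    (J : ℕ → Finset (Fin m)) (hJ : ∀ k, (J k).Nonempty)
    (s : Fin m → ℕ → ℕ)
    (hs1 : ∀ i k, s i k ≤ k)
    (hs2 : ∀ i, Filter.Tendsto (s i) Filter.atTop Filter.atTop)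
    (hs3 : ∀ i, ∀ K : ℕ, ∃ k, K ≤ k ∧ i ∈ J k)
    (E : Fin m → Matrix (Fin n) (Fin n) ℝ)
    (hEdiag : ∀ i p q, p ≠ q → E i p q = 0)
    (hEnn : ∀ i p, 0 ≤ E i p p)
    (hEsum : ∑ i, E i = 1)
    (η : ℝ) (hη : η = θ / ∑ i, infNorm (E i))
    (qt : ℕ) (hqt : 0 < qt)
    (hnorm : ∀ i, ∀ q, qt ≤ q → infNorm (((M i)⁻¹ * N i) ^ q) ≤ η)
    (q : Fin m → ℕ → ℕ) (hq : ∀ i k, qt ≤ q i k)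
    (Ek : ℕ → Fin m → Fin m → Matrix (Fin n) (Fin n) ℝ)
    (hEkdiag : ∀ k i l, ∀ p r, p ≠ r → Ek k i l p r = 0)
    (hEknn : ∀ k i l p, 0 ≤ Ek k i l p p)
    (hEksum : ∀ k l, l ∈ J k → ∑ i, Ek k i l = 1)
    (x : ℕ → Fin m → Fin n → ℝ) (hx0 : ∀ l, x 0 l = x0)
    (y : ℕ → Fin m → ℕ → Fin n → ℝ)
    (hy0 : ∀ k i, y k i 0 = x (s i k) i)
    (hy : ∀ k i v, 1 ≤ v → v ≤ q i k →
      SolvesLCP (M i) (fun p => f p + (N i *ᵥ y k i (v - 1)) p) (y k i v))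
    (hxn : ∀ k l, l ∉ J k → x (k + 1) l = x k l)
    (hxj : ∀ k l, l ∈ J k →
      x (k + 1) l = ω • (∑ i, Ek k i l *ᵥ y k i (q i k)) + (1 - ω) • x k l) :
    ∀ l, Filter.Tendsto (fun k => x k l) Filter.atTop (nhds xstar) :=
  async_relaxed_nonstationary_multisplitting_converges_M_general A f xstar hA θ hθ ω hω M N hsplit
    hMM hNnn hxstar J s hs1 hs2 hs3 E hEsum η hη qt hnorm q hq Ek hEkdiag hEknn hEksum x y hy0 hy
    hxn hxj
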